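/- (Theorem 6, outer bound on the positive normalized typical minimum distance region) Let Ω be an LT output degree distribution with average degree Ω̄, r_i ∈ (0,1] and r_o ∈ (0,1) with H_b(1 − r_o) − (1 − r_o) > 0. If r_i·(1 − r_o) > sup_{λ ∈ 𝒟_λ} [ r_i·H_b(λ) + log₂(1 − ρ_λ) ] (i.e., (r_i, r_o) lies in the positive normalized typical minimum distance region), then r_i < Ω̄·log₂(1/r_o) / (H_b(1 − r_o) − (1 − r_o)). -/
import Mathlib


open Finset Filter

/-- Binary entropy function (base-2 logarithms). -/
noncomputable def Hb (x : ℝ) : ℝ := -x * Real.logb 2 x - (1 - x) * Real.logb 2 (1 - x)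

/-- `ρ_λ = (1/2)·Σ_{j=1}^{dmax} Ω_j·(1 − (1 − 2λ)^j)`. -/
noncomputable def rho (dmax : ℕ) (Ω : ℕ → ℝ) (lam : ℝ) : ℝ :=
  (1 / 2) * ∑ j ∈ Finset.Icc 1 dmax, Ω j * (1 - (1 - 2 * lam) ^ j)

open scoped Classical in
/-- The domain `𝒟_λ`: `(0,1)` if `Ω_j = 0` for every even `j`, and `(0,1]` otherwise. -/
noncomputable def Dset (dmax : ℕ) (Ω : ℕ → ℝ) : Set ℝ :=
  if ∀ j ∈ Finset.Icc 1 dmax, Even j → Ω j = 0 then Set.Ioo 0 1 else Set.Ioc 0 1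

/-- `f(δ,λ) = r_i·H_b(λ) + δ·log₂ ρ_λ + (1−δ)·log₂(1−ρ_λ)`. -/
noncomputable def ff (dmax : ℕ) (Ω : ℕ → ℝ) (ri δ lam : ℝ) : ℝ :=
  ri * Hb lam + δ * Real.logb 2 (rho dmax Ω lam) + (1 - δ) * Real.logb 2 (1 - rho dmax Ω lam)

/-- `f_max(δ) = sup_{λ ∈ 𝒟_λ} f(δ,λ)`. -/
noncomputable def fmax (dmax : ℕ) (Ω : ℕ → ℝ) (ri δ : ℝ) : ℝ :=
  sSup (ff dmax Ω ri δ '' Dset dmax Ω)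

/-- Growth rate `G(δ) = H_b(δ) − r_i·(1 − r_o) + f_max(δ)`. -/
noncomputable def Gr (dmax : ℕ) (Ω : ℕ → ℝ) (ri ro δ : ℝ) : ℝ :=
  Hb δ - ri * (1 - ro) + fmax dmax Ω ri δ

/-- Normalized typical minimum distance `δ*`: `0` if `lim_{δ→0⁺} G(δ) ≥ 0`, and
`inf {δ > 0 : G(δ) > 0}` otherwise. -/
noncomputable def deltaStar (dmax : ℕ) (Ω : ℕ → ℝ) (ri ro : ℝ) : ℝ :=
  if 0 ≤ limUnder (nhdsWithin 0 (Set.Ioi 0)) (Gr dmax Ω ri ro) then 0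
  else sInf {δ : ℝ | 0 < δ ∧ 0 < Gr dmax Ω ri ro δ}

/-- `2·((1+x)/2)^j ≤ 1 + x^j` for `x ∈ [-1,1]`. -/
lemma key_pow (x : ℝ) (h1 : -1 ≤ x) (h2 : x ≤ 1) (j : ℕ) :
    2 * ((1 + x) / 2) ^ j ≤ 1 + x ^ j := by
  induction j with
  | zero => norm_num
  | succ n ih =>
    have hc0 : (0:ℝ) ≤ (1 + x) / 2 := by linarith
    have hxn : x ^ n ≤ 1 := by
      calc x ^ n ≤ |x ^ n| := le_abs_self _
        _ = |x| ^ n := abs_pow x n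
        _ ≤ 1 := pow_le_one₀ (abs_nonneg x) (abs_le.mpr ⟨h1, h2⟩)
    have step1 : 2 * ((1 + x) / 2) ^ (n + 1) ≤ (1 + x) / 2 * (1 + x ^ n) := by
      have h : 2 * ((1 + x) / 2) ^ (n + 1) = (1 + x) / 2 * (2 * ((1 + x) / 2) ^ n) := by ring
      rw [h]
      exact mul_le_mul_of_nonneg_left ih hc0
    have step2 : (1 + x) / 2 * (1 + x ^ n) ≤ 1 + x ^ (n + 1) := by
      have key : (0:ℝ) ≤ (1 - x) * (1 - x ^ n) :=
        mul_nonneg (by linarith) (by linarith)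
      have hp : x ^ (n + 1) = x * x ^ n := by ring
      nlinarith [key]
    linarith

/-- The binary entropy is at most `1`. -/
lemma Hb_le_one (x : ℝ) : Hb x ≤ 1 := by
  have h := Real.binEntropy_le_log_two (p := x)
  have hl2 : (0:ℝ) < Real.log 2 := Real.log_pos one_lt_two
  have heq : Hb x = Real.binEntropy x / Real.log 2 := by
    simp only [Hb, Real.binEntropy, Real.logb, Real.log_inv]
    ring
  rw [heq, div_le_one hl2]
  exact h

/-- Bounds on `ρ_λ` for `λ ∈ (0,1]`. -/
lemma rho_bounds (dmax : ℕ) (Ω : ℕ → ℝ)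
    (hΩpos : ∀ j ∈ Finset.Icc 1 dmax, 0 ≤ Ω j)
    (hΩsum : ∑ j ∈ Finset.Icc 1 dmax, Ω j = 1)
    (lam : ℝ) (h0 : 0 < lam) (h1 : lam ≤ 1) :
    0 ≤ rho dmax Ω lam ∧ rho dmax Ω lam ≤ 1 := by
  have habs : |1 - 2 * lam| ≤ 1 := abs_le.mpr ⟨by linarith, by linarith⟩
  have hpow : ∀ j : ℕ, -1 ≤ (1 - 2 * lam) ^ j ∧ (1 - 2 * lam) ^ j ≤ 1 := by
    intro j
    have : |(1 - 2 * lam) ^ j| ≤ 1 := by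
      rw [abs_pow]; exact pow_le_one₀ (abs_nonneg _) habs
    exact ⟨neg_le_of_abs_le this, le_of_abs_le this⟩
  constructor
  · apply mul_nonneg (by norm_num)
    apply Finset.sum_nonneg
    intro j hj
    exact mul_nonneg (hΩpos j hj) (by linarith [(hpow j).2])
  · have : ∑ j ∈ Finset.Icc 1 dmax, Ω j * (1 - (1 - 2 * lam) ^ j) ≤
        ∑ j ∈ Finset.Icc 1 dmax, Ω j * 2 := by
      apply Finset.sum_le_sum
      intro j hj
      exact mul_le_mul_of_nonneg_left (by linarith [(hpow j).1]) (hΩpos j hj)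
    rw [← Finset.sum_mul, hΩsum] at this
    unfold rho
    linarith

/-- Theorem 6 (outer bound on the positive normalized typical minimum distance region):
if `H_b(1 − r_o) − (1 − r_o) > 0` and `(r_i, r_o)` lies in the positive normalized
typical minimum distance region, i.e.
`r_i·(1 − r_o) > sup_{λ ∈ 𝒟_λ} [ r_i·H_b(λ) + log₂(1 − ρ_λ) ]`, then
`r_i < Ω̄·log₂(1/r_o) / (H_b(1 − r_o) − (1 − r_o))`. -/
theorem stmt_15 (dmax : ℕ) (Ω : ℕ → ℝ)
    (hΩpos : ∀ j ∈ Finset.Icc 1 dmax, 0 ≤ Ω j)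
    (hΩsum : ∑ j ∈ Finset.Icc 1 dmax, Ω j = 1)
    (ri ro : ℝ) (hri : ri ∈ Set.Ioc (0 : ℝ) 1) (hro : ro ∈ Set.Ioo (0 : ℝ) 1)
    (hden : 0 < Hb (1 - ro) - (1 - ro))
    (hregion : ri * (1 - ro) >
      sSup ((fun lam => ri * Hb lam + Real.logb 2 (1 - rho dmax Ω lam)) '' Dset dmax Ω)) :
    ri < (∑ j ∈ Finset.Icc 1 dmax, (j : ℝ) * Ω j) * Real.logb 2 (1 / ro) /
      (Hb (1 - ro) - (1 - ro)) := by
  obtain ⟨hri0, hri1⟩ := hri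
  obtain ⟨hro0, hro1⟩ := hro
  have hl2 : (0:ℝ) < Real.log 2 := Real.log_pos one_lt_two
  set S : ℝ := ∑ j ∈ Finset.Icc 1 dmax, (j : ℝ) * Ω j with hS
  set lam0 : ℝ := 1 - ro with hlam0
  have hlam00 : 0 < lam0 := by simp [hlam0]; linarith
  have hlam01 : lam0 < 1 := by simp [hlam0]; linarith
  -- lam0 ∈ Dset
  have hmem : lam0 ∈ Dset dmax Ω := by
    unfold Dset
    split
    · exact ⟨hlam00, hlam01⟩
    · exact ⟨hlam00, le_of_lt hlam01⟩
  have hDsub : Dset dmax Ω ⊆ Set.Ioc 0 1 := by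
    unfold Dset
    split
    · exact fun x hx => ⟨hx.1, le_of_lt hx.2⟩
    · exact fun x hx => hx
  -- the set is bounded above by ri
  have hbdd : BddAbove ((fun lam => ri * Hb lam + Real.logb 2 (1 - rho dmax Ω lam)) ''
      Dset dmax Ω) := by
    refine ⟨ri, ?_⟩
    rintro y ⟨lam, hlam, rfl⟩
    obtain ⟨hl0, hl1⟩ := hDsub hlam
    obtain ⟨hr0, hr1⟩ := rho_bounds dmax Ω hΩpos hΩsum lam hl0 hl1
    have h1 : ri * Hb lam ≤ ri := by
      have := mul_le_mul_of_nonneg_left (Hb_le_one lam) (le_of_lt hri0)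
      simpa using this
    have h2 : Real.logb 2 (1 - rho dmax Ω lam) ≤ 0 :=
      Real.logb_nonpos one_lt_two (by linarith) (by linarith)
    dsimp only
    linarith
  -- pointwise: value at lam0 is < ri*(1-ro)
  have hpt : ri * Hb lam0 + Real.logb 2 (1 - rho dmax Ω lam0) < ri * (1 - ro) :=
    lt_of_le_of_lt (le_csSup hbdd ⟨lam0, hmem, rfl⟩) hregion
  -- Jensen: exp (S * log ro) ≤ ∑ Ω j * ro ^ j
  have hjensen : Real.exp (S * Real.log ro) ≤
      ∑ j ∈ Finset.Icc 1 dmax, Ω j * ro ^ j := by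
    have hconv : ConvexOn ℝ Set.univ Real.exp := convexOn_exp
    have := hconv.map_sum_le (t := Finset.Icc 1 dmax) (w := Ω)
      (p := fun j => (j : ℝ) * Real.log ro) hΩpos hΩsum (fun i _ => Set.mem_univ _)
    simp only [smul_eq_mul] at this
    have hL : ∑ j ∈ Finset.Icc 1 dmax, Ω j * ((j : ℝ) * Real.log ro) = S * Real.log ro := by
      rw [hS, Finset.sum_mul]
      exact Finset.sum_congr rfl fun j _ => by ring
    have hR : ∀ j ∈ Finset.Icc 1 dmax,
        Ω j * Real.exp ((j : ℝ) * Real.log ro) = Ω j * ro ^ j := by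
      intro j _
      rw [← Real.exp_log hro0, ← Real.exp_nat_mul, Real.log_exp]
    rw [hL] at this
    calc Real.exp (S * Real.log ro)
        ≤ ∑ j ∈ Finset.Icc 1 dmax, Ω j * Real.exp ((j : ℝ) * Real.log ro) := this
      _ = ∑ j ∈ Finset.Icc 1 dmax, Ω j * ro ^ j := Finset.sum_congr rfl hR
  -- ∑ Ω j * ro^j ≤ 1 - rho lam0
  have hterm : ∑ j ∈ Finset.Icc 1 dmax, Ω j * ro ^ j ≤ 1 - rho dmax Ω lam0 := by
    have hrho : 1 - rho dmax Ω lam0 =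
        ∑ j ∈ Finset.Icc 1 dmax, Ω j * ((1 + (1 - 2 * lam0) ^ j) / 2) := by
      unfold rho
      rw [Finset.mul_sum]
      have h1 : (1:ℝ) = ∑ j ∈ Finset.Icc 1 dmax, Ω j := hΩsum.symm
      nth_rewrite 1 [h1]
      rw [← Finset.sum_sub_distrib]
      exact Finset.sum_congr rfl fun j _ => by ring
    rw [hrho]
    apply Finset.sum_le_sum
    intro j hj
    apply mul_le_mul_of_nonneg_left _ (hΩpos j hj)
    have hx1 : (-1:ℝ) ≤ 1 - 2 * lam0 := by linarith
    have hx2 : (1:ℝ) - 2 * lam0 ≤ 1 := by linarith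
    have := key_pow (1 - 2 * lam0) hx1 hx2 j
    have hro' : ro = (1 + (1 - 2 * lam0)) / 2 := by rw [hlam0]; ring
    rw [hro']
    linarith
  have hexp_pos : 0 < Real.exp (S * Real.log ro) := Real.exp_pos _
  have hchain : Real.exp (S * Real.log ro) ≤ 1 - rho dmax Ω lam0 := le_trans hjensen hterm
  -- take logb
  have hlogb : S * Real.logb 2 ro ≤ Real.logb 2 (1 - rho dmax Ω lam0) := by
    have h := (Real.logb_le_logb (b := 2) one_lt_two hexp_pos
      (lt_of_lt_of_le hexp_pos hchain)).mpr hchain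
    have heq : Real.logb 2 (Real.exp (S * Real.log ro)) = S * Real.logb 2 ro := by
      rw [Real.logb, Real.log_exp, Real.logb]
      ring
    rwa [heq] at h
  have hinv : Real.logb 2 (1 / ro) = -Real.logb 2 ro := by
    rw [one_div, Real.logb_inv]
  -- combine
  have hfinal : ri * (Hb (1 - ro) - (1 - ro)) < S * Real.logb 2 (1 / ro) := by
    rw [hinv]
    have : ri * Hb (1 - ro) + S * Real.logb 2 ro < ri * (1 - ro) := by
      rw [hlam0] at hpt hlogb
      linarith
    linarith
  rw [lt_div_iff₀ hden]
  linarith
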